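/- Let d be a natural number that is not a perfect square, m a nonzero integer with |m| < √d, T the minimal period of the continued fraction of √d, p_n/q_n the convergents of √d, and (v_n) the associated sequence. Let S be the set of pairs (x, y) of positive coprime natural numbers with x² − d·y² = m, and for ℓ ∈ ℤ let E_ℓ = { j : 1 ≤ j ≤ T and (−1)^j·v_j = ℓ }. Assume T is odd. Then S is nonempty if and only if E_m ∪ E_{−m} is nonempty, and in that case S equals the union over N ∈ E_m of the sets { (p_{N+2kT−1}, q_{N+2kT−1}) : k ∈ ℕ } together with the union over M ∈ E_{−m} of the sets { (p_{M+(2k+1)T−1}, q_{M+(2k+1)T−1}) : k ∈ ℕ }. -/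

import Mathlib

/-!
A coprime solution of `x² - d y² = m` with `0 < |m| < √d` makes `x / y` (if `m > 0`) or `y / x`
(if `m < 0`) so close to `√d`, resp. `1 / √d`, that Legendre's theorem applies: `(x, y)` is a
convergent `(p_{j-1}, q_{j-1})` of `√d`, the expansion of `1 / √d` being that of `√d` shifted by one
place. Conversely, substituting the complete quotient `x_j = (u_j + √d) / v_j` into
`√d = (x_j p_{j-1} + p_{j-2}) / (x_j q_{j-1} + q_{j-2})` and separating rational and irrational
parts gives `p_{j-1}² - d q_{j-1}² = (-1)^j v_j`. An irrational number is determined by its partial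
quotients, so the complete quotients, hence `v`, inherit the period `T`; as `T` is odd,
`(-1)^j v_j` changes sign after each period, which sorts the admissible indices `j` into
`N + 2kT` with `N ∈ E_m` and `M + (2k+1)T` with `M ∈ E_{-m}`.
-/

/-- The complete quotients of a real number `x`:
`cq x 0 = x` and `cq x (n+1) = 1 / (cq x n - ⌊cq x n⌋)`. -/
noncomputable def cq (x : ℝ) : ℕ → ℝ
  | 0 => x
  | n + 1 => (Int.fract (cq x n))⁻¹

/-- The partial quotients of a real number `x`: `pq x n = ⌊cq x n⌋`. -/
noncomputable def pq (x : ℝ) (n : ℕ) : ℤ := ⌊cq x n⌋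

open Filter Topology

/-- `cfNum a (n + 2) / cfDen a (n + 2)` is the `n`-th convergent of `[a 0; a 1, a 2, …]`. -/
def cfNum (a : ℕ → ℤ) : ℕ → ℤ
  | 0 => 0
  | 1 => 1
  | n + 2 => a n * cfNum a (n + 1) + cfNum a n

def cfDen (a : ℕ → ℤ) : ℕ → ℤ
  | 0 => 1
  | 1 => 0
  | n + 2 => a n * cfDen a (n + 1) + cfDen a n

section Continuants

variable (a : ℕ → ℤ)

theorem eq_cfNum_of_recurrence {P : ℕ → ℤ} (h0 : P 0 = 0) (h1 : P 1 = 1)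
    (h : ∀ n, P (n + 2) = a n * P (n + 1) + P n) : ∀ n, P n = cfNum a n
  | 0 => h0
  | 1 => h1
  | n + 2 => by
      rw [h, cfNum, eq_cfNum_of_recurrence h0 h1 h n, eq_cfNum_of_recurrence h0 h1 h (n + 1)]

theorem eq_cfDen_of_recurrence {Q : ℕ → ℤ} (h0 : Q 0 = 1) (h1 : Q 1 = 0)
    (h : ∀ n, Q (n + 2) = a n * Q (n + 1) + Q n) : ∀ n, Q n = cfDen a n
  | 0 => h0
  | 1 => h1
  | n + 2 => by
      rw [h, cfDen, eq_cfDen_of_recurrence h0 h1 h n, eq_cfDen_of_recurrence h0 h1 h (n + 1)]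

theorem cfNum_succ_mul_cfDen_sub : ∀ n,
    cfNum a (n + 1) * cfDen a n - cfNum a n * cfDen a (n + 1) = (-1) ^ n
  | 0 => by simp [cfNum, cfDen]
  | n + 1 => by
      rw [cfNum, cfDen, pow_succ, ← cfNum_succ_mul_cfDen_sub n]
      ring

theorem isCoprime_cfNum_cfDen (n : ℕ) : IsCoprime (cfNum a (n + 1)) (cfDen a (n + 1)) := by
  have hsq : ((-1 : ℤ) ^ n) * (-1) ^ n = 1 := by rw [← mul_pow, neg_one_mul, neg_neg, one_pow]
  exact ⟨(-1) ^ n * cfDen a n, -((-1) ^ n * cfNum a n), by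
    linear_combination (-1) ^ n * cfNum_succ_mul_cfDen_sub a n + hsq⟩

theorem cfDen_add_two_tail : ∀ n, cfDen a (n + 2) = cfNum (fun k => a (k + 1)) (n + 1)
  | 0 => by simp [cfNum, cfDen]
  | 1 => by simp [cfNum, cfDen]
  | n + 2 => by
      rw [cfDen, cfDen_add_two_tail n, cfDen_add_two_tail (n + 1)]
      rfl

theorem cfNum_add_two_tail : ∀ n, cfNum a (n + 2) =
    a 0 * cfNum (fun k => a (k + 1)) (n + 1) + cfDen (fun k => a (k + 1)) (n + 1)
  | 0 => by simp [cfNum, cfDen]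
  | 1 => by simp [cfNum, cfDen]; ring
  | n + 2 => by
      rw [cfNum, cfNum_add_two_tail n, cfNum_add_two_tail (n + 1)]
      simp only [cfNum, cfDen]
      ring

variable {a}

theorem cfNum_succ_pos (ha : ∀ k, 0 < a k) : ∀ n, 0 < cfNum a (n + 1)
  | 0 => one_pos
  | 1 => by simpa [cfNum] using ha 0
  | n + 2 => by
      rw [cfNum]
      exact add_pos (mul_pos (ha _) (cfNum_succ_pos ha (n + 1))) (cfNum_succ_pos ha n)

theorem cfDen_pos (ha : ∀ k, 0 < a (k + 1)) {n : ℕ} (hn : 2 ≤ n) : 0 < cfDen a n := by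
  obtain ⟨n, rfl⟩ := Nat.exists_eq_add_of_le' hn
  rw [cfDen_add_two_tail]
  exact cfNum_succ_pos ha n

end Continuants

section CompleteQuotients

theorem cq_add (x : ℝ) (j : ℕ) : ∀ k, cq x (j + k) = cq (cq x j) k
  | 0 => rfl
  | k + 1 => congrArg (fun t => (Int.fract t)⁻¹) (cq_add x j k)

theorem pq_add (x : ℝ) (j k : ℕ) : pq x (j + k) = pq (cq x j) k :=
  congrArg Int.floor (cq_add x j k)

theorem pq_fract_inv (x : ℝ) (k : ℕ) : pq (Int.fract x)⁻¹ k = pq x (k + 1) := by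
  rw [add_comm, pq_add]
  rfl

variable {x : ℝ}

theorem irrational_cq (hx : Irrational x) : ∀ n, Irrational (cq x n)
  | 0 => hx
  | n + 1 => ((irrational_cq hx n).sub_intCast ⌊cq x n⌋).inv

theorem fract_cq_ne_zero (hx : Irrational x) (n : ℕ) : Int.fract (cq x n) ≠ 0 :=
  ((irrational_cq hx n).sub_intCast _).ne_zero

theorem one_le_pq_succ (hx : Irrational x) (n : ℕ) : 1 ≤ pq x (n + 1) := by
  have h : 1 < cq x (n + 1) :=
    one_lt_inv_iff₀.2
      ⟨(Int.fract_nonneg _).lt_of_ne' (fract_cq_ne_zero hx n), Int.fract_lt_one _⟩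
  exact Int.le_floor.2 (by exact_mod_cast h.le)

theorem self_mul_cq_cfDen_add_eq (hx : Irrational x) : ∀ n,
    x * (cq x n * cfDen (pq x) (n + 1) + cfDen (pq x) n) =
      cq x n * cfNum (pq x) (n + 1) + cfNum (pq x) n
  | 0 => by simp [cfNum, cfDen, cq]
  | n + 1 => by
      have hfract : cq x (n + 1) * (cq x n - pq x n) = 1 :=
        inv_mul_cancel₀ (fract_cq_ne_zero hx n)
      rw [cfNum, cfDen]
      push_cast
      linear_combination cq x (n + 1) * self_mul_cq_cfDen_add_eq hx n +
        (cfNum (pq x) (n + 1) - x * cfDen (pq x) (n + 1)) * hfract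

theorem convergent_eq_cfNum_div_cfDen (hx : Irrational x) (n : ℕ) :
    x.convergent n = cfNum (pq x) (n + 2) / cfDen (pq x) (n + 2) := by
  induction n generalizing x with
  | zero => simp [cfNum, cfDen, pq, cq]
  | succ n ih =>
    have htail : (fun k => pq x (k + 1)) = pq (Int.fract x)⁻¹ :=
      funext fun k => (pq_fract_inv x k).symm
    have hpos : 0 < cfNum (pq (Int.fract x)⁻¹) (n + 2) :=
      cfNum_succ_pos (fun k => by rw [pq_fract_inv]; exact one_le_pq_succ hx k) (n + 1)
    rw [Real.convergent_succ, ih (x := (Int.fract x)⁻¹) (irrational_cq hx 1),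
      cfNum_add_two_tail (pq x) (n + 1), cfDen_add_two_tail (pq x) (n + 1), htail, inv_div]
    have hne : (cfNum (pq (Int.fract x)⁻¹) (n + 2) : ℚ) ≠ 0 := by exact_mod_cast hpos.ne'
    rw [eq_div_iff hne, add_mul, div_mul_cancel₀ _ hne]
    push_cast
    rfl

theorem convergent_eq_of_pq_eq {y : ℝ} (h : pq x = pq y) (n : ℕ) :
    x.convergent n = y.convergent n := by
  induction n generalizing x y with
  | zero => exact congrArg (fun z : ℤ => (z : ℚ)) (congrFun h 0)
  | succ n ih =>
    have htail : pq (Int.fract x)⁻¹ = pq (Int.fract y)⁻¹ :=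
      funext fun k => by simp only [pq_fract_inv, h]
    rw [Real.convergent_succ, Real.convergent_succ, ih htail,
      show ⌊x⌋ = ⌊y⌋ from congrFun h 0]

theorem eq_of_pq_eq {y : ℝ} (h : pq x = pq y) : x = y := by
  have hconv (z : ℝ) : Tendsto (fun n => (z.convergent n : ℝ)) atTop (𝓝 z) :=
    (GenContFract.of_convergence z).congr (Real.convs_eq_convergent z)
  refine tendsto_nhds_unique (hconv x) ?_
  simpa only [convergent_eq_of_pq_eq h] using hconv y

theorem cq_add_eq_of_pq_add_eq {T : ℕ} (h : ∀ n, 1 ≤ n → pq x (n + T) = pq x n) {n : ℕ}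
    (hn : 1 ≤ n) : cq x (n + T) = cq x n :=
  eq_of_pq_eq <| funext fun k => by rw [← pq_add, ← pq_add, add_right_comm, h _ (by omega)]

theorem pq_inv_tail_of_one_lt (hx : 1 < x) : (fun k => pq x⁻¹ (k + 1)) = pq x := by
  have hfract : Int.fract x⁻¹ = x⁻¹ :=
    Int.fract_eq_self.2 ⟨inv_nonneg.2 (by linarith), inv_lt_one_of_one_lt₀ hx⟩
  funext k
  rw [← pq_fract_inv, hfract, inv_inv]

theorem pq_inv_zero_of_one_lt (hx : 1 < x) : pq x⁻¹ 0 = 0 :=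
  Int.floor_eq_zero_iff.2 ⟨inv_nonneg.2 (by linarith), inv_lt_one_of_one_lt₀ hx⟩

theorem cfNum_pq_inv_of_one_lt (hx : 1 < x) (n : ℕ) :
    cfNum (pq x⁻¹) (n + 2) = cfDen (pq x) (n + 1) := by
  rw [cfNum_add_two_tail, pq_inv_tail_of_one_lt hx, pq_inv_zero_of_one_lt hx, zero_mul, zero_add]

theorem cfDen_pq_inv_of_one_lt (hx : 1 < x) (n : ℕ) :
    cfDen (pq x⁻¹) (n + 2) = cfNum (pq x) (n + 1) := by
  rw [cfDen_add_two_tail, pq_inv_tail_of_one_lt hx]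

end CompleteQuotients

theorem exists_eq_cfNum_cfDen_of_abs_sub_lt {x : ℝ} (hx : Irrational x) {p q : ℤ} (hq : 0 < q)
    (hpq : IsCoprime p q) (h : |x - p / q| < 1 / (2 * q ^ 2)) :
    ∃ n, p = cfNum (pq x) (n + 2) ∧ q = cfDen (pq x) (n + 2) := by
  have hcop := Int.isCoprime_iff_nat_coprime.1 hpq
  have hden : (((p / q : ℚ).den : ℤ) : ℝ) = q := by
    exact_mod_cast Rat.den_div_eq_of_coprime hq hcop
  obtain ⟨n, hn⟩ := Real.exists_rat_eq_convergent (ξ := x) (q := p / q) (by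
    push_cast at hden ⊢
    rwa [hden])
  rw [convergent_eq_cfNum_div_cfDen hx] at hn
  exact ⟨n, Rat.div_int_inj hq (cfDen_pos (one_le_pq_succ hx) (by omega)) hcop
    (Int.isCoprime_iff_nat_coprime.1 (isCoprime_cfNum_cfDen _ (n + 1))) hn⟩

theorem abs_sub_div_lt_of_sq_sub_sq {β x y : ℝ} (hβ : 0 < β) (hx : 0 < x) (hy : 0 < y)
    (h0 : 0 < x ^ 2 - β ^ 2 * y ^ 2) (h1 : x ^ 2 - β ^ 2 * y ^ 2 < β) :
    |β - x / y| < 1 / (2 * y ^ 2) := by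
  have hxy : β * y < x := by nlinarith
  -- `(x - β y) (x + β y) < β` with `x + β y > 2 β y`
  have key : 2 * y * (x - β * y) < 1 := by nlinarith
  rw [abs_sub_comm, abs_of_pos (by rw [sub_pos, lt_div_iff₀ hy]; linarith), div_sub' hy.ne',
    div_lt_div_iff₀ hy (by positivity)]
  nlinarith

theorem Irrational.eq_zero_of_intCast_add_mul_eq_zero {α : ℝ} (hα : Irrational α) {p q : ℤ}
    (h : p + q * α = 0) : p = 0 ∧ q = 0 := by
  obtain rfl : q = 0 := by
    by_contra hq
    exact ((hα.intCast_mul hq).intCast_add p).ne_zero h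
  simpa using h

theorem Irrational.eq_of_intCast_add_div_eq {α : ℝ} (hα : Irrational α) {u v u' v' : ℤ}
    (hv : v ≠ 0) (hv' : v' ≠ 0) (h : (u + α) / v = (u' + α) / v') : v = v' := by
  rw [div_eq_div_iff (by exact_mod_cast hv) (by exact_mod_cast hv')] at h
  have := hα.eq_zero_of_intCast_add_mul_eq_zero (p := u * v' - u' * v) (q := v' - v)
    (by push_cast; linear_combination h)
  omega

section QuadraticIrrational

variable {d : ℕ}

theorem one_lt_sqrt_of_not_isSquare (hd : ¬IsSquare d) : 1 < √d := by
  have h0 : d ≠ 0 := by rintro rfl; exact hd ⟨0, rfl⟩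
  have h1 : d ≠ 1 := by rintro rfl; exact hd ⟨1, rfl⟩
  exact Real.lt_sqrt_of_sq_lt (by norm_num; exact_mod_cast (by omega : 1 < d))

theorem pq_sqrt_pos (hd : ¬IsSquare d) : ∀ k, 0 < pq √d k
  | 0 => Int.floor_pos.2 (one_lt_sqrt_of_not_isSquare hd).le
  | k + 1 => one_le_pq_succ (irrational_sqrt_natCast_iff.2 hd) k

theorem natCast_sub_sq_ne_zero (hd : ¬IsSquare d) (u : ℤ) : (d : ℤ) - u ^ 2 ≠ 0 := fun h =>
  hd (Int.isSquare_natCast_iff.1 ⟨u, by linear_combination h⟩)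

theorem inv_add_sqrt_div_sub_eq (hd : ¬IsSquare d) {u v c u' v' : ℤ} (hv : v ≠ 0)
    (hu' : u' = c * v - u) (hvv : v * v' = d - u' ^ 2) :
    ((u + √d) / v - c)⁻¹ = (u' + √d) / v' := by
  have hα := irrational_sqrt_natCast_iff.2 hd
  have hsub : √d - u' ≠ 0 := (hα.sub_intCast u').ne_zero
  have hadd : (u' : ℝ) + √d ≠ 0 := (hα.intCast_add u').ne_zero
  have hprod : (v : ℝ) * v' = (√d - u') * (u' + √d) := by
    have : ((v * v' : ℤ) : ℝ) = ((d - u' ^ 2 : ℤ) : ℝ) := congrArg _ hvv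
    push_cast at this
    rw [this]
    linear_combination -Real.sq_sqrt (Nat.cast_nonneg d)
  have hv' : (v' : ℝ) ≠ 0 := by
    rintro h0
    rw [h0, mul_zero] at hprod
    exact mul_ne_zero hsub hadd hprod.symm
  have hvR : (v : ℝ) ≠ 0 := by exact_mod_cast hv
  rw [show (u + √d) / v - c = (√d - u') / v by rw [hu']; push_cast; field_simp; ring,
    inv_div, div_eq_div_iff hsub hv']
  linear_combination hprod

theorem cq_sqrt_eq (hd : ¬IsSquare d) {a' u v : ℕ → ℤ} (ha'0 : a' 0 = 2 * pq √d 0)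
    (ha' : ∀ n, 1 ≤ n → a' n = pq √d n) (hu0 : u 0 = pq √d 0) (hv0 : v 0 = 1)
    (hv_ne : ∀ n, v n ≠ 0) (hu : ∀ n, u (n + 1) = a' n * v n - u n)
    (hv : ∀ n, v n * v (n + 1) = d - u (n + 1) ^ 2) {n : ℕ} (hn : 1 ≤ n) :
    cq √d n = (u n + √d) / v n := by
  induction n, hn using Nat.le_induction with
  | base =>
    rw [← inv_add_sqrt_div_sub_eq hd (hv_ne 0) (hu 0) (hv 0), hu0, hv0, ha'0]
    show (Int.fract √d)⁻¹ = _
    simp only [Int.fract, pq, cq]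
    push_cast
    ring
  | succ n hn ih =>
    rw [← inv_add_sqrt_div_sub_eq hd (hv_ne n) (hu n) (hv n), ha' n hn, ← ih]
    rfl

theorem cfNum_sq_sub_mul_cfDen_sq (hd : ¬IsSquare d) {n : ℕ} {u v : ℤ} (hv : v ≠ 0)
    (h : cq √d n = (u + √d) / v) :
    cfNum (pq √d) (n + 1) ^ 2 - d * cfDen (pq √d) (n + 1) ^ 2 = (-1) ^ n * v := by
  have hα := irrational_sqrt_natCast_iff.2 hd
  have key := self_mul_cq_cfDen_add_eq hα n
  rw [h] at key
  set P₁ := cfNum (pq √d) (n + 1)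
  set P₀ := cfNum (pq √d) n
  set Q₁ := cfDen (pq √d) (n + 1)
  set Q₀ := cfDen (pq √d) n
  have hvR : (v : ℝ) ≠ 0 := by exact_mod_cast hv
  obtain ⟨hB, hA⟩ := hα.eq_zero_of_intCast_add_mul_eq_zero
    (p := d * Q₁ - u * P₁ - v * P₀) (q := u * Q₁ + v * Q₀ - P₁) (by
      field_simp at key
      push_cast
      linear_combination key - Q₁ * Real.sq_sqrt (Nat.cast_nonneg d))
  linear_combination -Q₁ * hB - P₁ * hA + v * cfNum_succ_mul_cfDen_sub (pq √d) n

end QuadraticIrrational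


theorem exists_eq_cfNum_cfDen_of_sq_sub_mul_sq_eq {d : ℕ} (hd : ¬IsSquare d) {m : ℤ}
    (hm0 : m ≠ 0) (hm : |(m : ℝ)| < √d) {x y : ℕ} (hx : 0 < x) (hy : 0 < y)
    (hxy : x.Coprime y) (h : (x : ℤ) ^ 2 - d * y ^ 2 = m) :
    ∃ n, (x : ℤ) = cfNum (pq √d) (n + 2) ∧ (y : ℤ) = cfDen (pq √d) (n + 2) := by
  have hα := irrational_sqrt_natCast_iff.2 hd
  have hα1 := one_lt_sqrt_of_not_isSquare hd
  have hα0 : 0 < √d := by linarith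
  have hR : (x : ℝ) ^ 2 - √d ^ 2 * y ^ 2 = m := by
    rw [Real.sq_sqrt (Nat.cast_nonneg d)]
    exact_mod_cast h
  have hcop : IsCoprime (x : ℤ) y := Nat.isCoprime_iff_coprime.2 hxy
  have hx' : (0 : ℝ) < x := by exact_mod_cast hx
  have hy' : (0 : ℝ) < y := by exact_mod_cast hy
  rcases hm0.lt_or_gt with hneg | hpos
  · -- `y / x` then approximates `1 / √d`
    have hmR : (m : ℝ) < 0 := by exact_mod_cast hneg
    rw [abs_of_neg hmR] at hm
    have hR' : (y : ℝ) ^ 2 - (√d)⁻¹ ^ 2 * x ^ 2 = -m / √d ^ 2 := by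
      field_simp
      linear_combination -hR
    obtain ⟨n, hyn, hxn⟩ := exists_eq_cfNum_cfDen_of_abs_sub_lt hα.inv (p := y) (q := x)
      (by exact_mod_cast hx) hcop.symm (by
        push_cast
        refine abs_sub_div_lt_of_sq_sub_sq (by positivity) hy' hx' ?_ ?_ <;> rw [hR']
        · exact div_pos (by linarith) (by positivity)
        · rw [div_lt_iff₀ (by positivity), pow_two, ← mul_assoc, inv_mul_cancel₀ hα0.ne',
            one_mul]
          exact hm)
    rw [cfNum_pq_inv_of_one_lt hα1] at hyn
    rw [cfDen_pq_inv_of_one_lt hα1] at hxn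
    cases n with
    | zero =>
      simp only [cfDen, Nat.cast_eq_zero] at hyn
      omega
    | succ n => exact ⟨n, hxn, hyn⟩
  · exact exists_eq_cfNum_cfDen_of_abs_sub_lt hα (by exact_mod_cast hy) hcop (by
      push_cast
      refine abs_sub_div_lt_of_sq_sub_sq hα0 hx' hy' ?_ ?_ <;> rw [hR]
      · exact_mod_cast hpos
      · exact (le_abs_self _).trans_lt hm)

theorem Function.Antiperiodic.eq_iff_exists_add_mul {β : Type*} [InvolutiveNeg β] {f : ℕ → β}
    {T : ℕ} (hf : Function.Antiperiodic f T) (hT : 0 < T) (b : β) (i : ℕ) :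
    f i = b ↔ (∃ r k, r < T ∧ f r = b ∧ i = r + 2 * k * T) ∨
      (∃ r k, r < T ∧ f r = -b ∧ i = r + (2 * k + 1) * T) := by
  have heven (r k : ℕ) : f (r + 2 * k * T) = f r := by
    rw [show 2 * k * T = k * (2 * T) by ring]
    exact hf.nat_even_mul_periodic k r
  have hodd (r k : ℕ) : f (r + (2 * k + 1) * T) = -f r := by
    rw [show (2 * k + 1) * T = k * (2 * T) + T by ring]
    exact hf.nat_odd_mul_antiperiodic k r
  constructor
  · rintro rfl
    have hi := Nat.mod_add_div i T
    obtain ⟨k, hk | hk⟩ := Nat.even_or_odd' (i / T)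
    · rw [hk, mul_comm] at hi
      exact Or.inl ⟨i % T, k, Nat.mod_lt i hT, (heven _ k).symm.trans (congrArg f hi), hi.symm⟩
    · rw [hk, mul_comm] at hi
      refine Or.inr ⟨i % T, k, Nat.mod_lt i hT, ?_, hi.symm⟩
      rw [← congrArg f hi, hodd, neg_neg]
  · rintro (⟨r, k, -, rfl, rfl⟩ | ⟨r, k, -, hr, rfl⟩)
    · exact heven r k
    · rw [hodd, hr, neg_neg]

theorem exists_eq_and_iff_of_add_eq_neg {β : Type*} [InvolutiveNeg β] {s : ℕ → β} {T : ℕ}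
    (hT : 0 < T) (hs : ∀ j, 1 ≤ j → s (j + T) = -s j) (b : β) (g : ℕ → Prop) :
    (∃ j, 1 ≤ j ∧ s j = b ∧ g j) ↔
      (∃ N k, 1 ≤ N ∧ N ≤ T ∧ s N = b ∧ g (N + 2 * k * T)) ∨
        (∃ M k, 1 ≤ M ∧ M ≤ T ∧ s M = -b ∧ g (M + (2 * k + 1) * T)) := by
  have hf : Function.Antiperiodic (fun i => s (i + 1)) T := fun i => by
    simpa only [add_right_comm] using hs (i + 1) (by omega)
  constructor
  · rintro ⟨j, hj, hsj, hg⟩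
    obtain ⟨i, rfl⟩ : ∃ i, j = i + 1 := ⟨j - 1, by omega⟩
    rcases (hf.eq_iff_exists_add_mul hT b i).1 hsj with
      ⟨r, k, hr, hsr, rfl⟩ | ⟨r, k, hr, hsr, rfl⟩
    · exact Or.inl ⟨r + 1, k, by omega, hr, hsr, by rwa [add_right_comm] at hg⟩
    · exact Or.inr ⟨r + 1, k, by omega, hr, hsr, by rwa [add_right_comm] at hg⟩
  · rintro (⟨N, k, hN1, hNT, hsN, hg⟩ | ⟨N, k, hN1, hNT, hsN, hg⟩)
    all_goals obtain ⟨r, rfl⟩ : ∃ r, N = r + 1 := ⟨N - 1, by omega⟩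
    · refine ⟨r + 2 * k * T + 1, by omega, ?_, by rwa [add_right_comm]⟩
      exact (hf.eq_iff_exists_add_mul hT b _).2 (Or.inl ⟨r, k, by omega, hsN, rfl⟩)
    · refine ⟨r + (2 * k + 1) * T + 1, by omega, ?_, by rwa [add_right_comm]⟩
      exact (hf.eq_iff_exists_add_mul hT b _).2 (Or.inr ⟨r, k, by omega, hsN, rfl⟩)

theorem coprime_sq_sub_mul_sq_eq_iff {d : ℕ} (hd : ¬IsSquare d) {m : ℤ} (hm0 : m ≠ 0)
    (hm : |(m : ℝ)| < √d) (x y : ℕ) :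
    (0 < x ∧ 0 < y ∧ x.Coprime y ∧ (x : ℤ) ^ 2 - d * y ^ 2 = m) ↔
      ∃ j, 1 ≤ j ∧ cfNum (pq √d) (j + 1) ^ 2 - d * cfDen (pq √d) (j + 1) ^ 2 = m ∧
        (x : ℤ) = cfNum (pq √d) (j + 1) ∧ (y : ℤ) = cfDen (pq √d) (j + 1) := by
  constructor
  · rintro ⟨hx, hy, hxy, h⟩
    obtain ⟨n, hxn, hyn⟩ := exists_eq_cfNum_cfDen_of_sq_sub_mul_sq_eq hd hm0 hm hx hy hxy h
    exact ⟨n + 1, by omega, hxn ▸ hyn ▸ h, hxn, hyn⟩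
  · rintro ⟨j, hj, h, hxj, hyj⟩
    have hxpos := cfNum_succ_pos (pq_sqrt_pos hd) j
    have hypos := cfDen_pos (fun k => pq_sqrt_pos hd (k + 1)) (n := j + 1) (by omega)
    refine ⟨by omega, by omega, Nat.isCoprime_iff_coprime.1 ?_, hxj ▸ hyj ▸ h⟩
    rw [hxj, hyj]
    exact isCoprime_cfNum_cfDen _ j

/-- Indexing: `P (n + 2) = p_n` and `Q (n + 2) = q_n`, so `p_{j-1} = P (j + 1)`. -/
theorem stmt13_general (d : ℕ) (hd : ¬ IsSquare d)
    (m : ℤ) (hm : m ≠ 0) (hmd : |(m : ℝ)| < Real.sqrt d)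
    (a a' : ℕ → ℤ) (ha : ∀ n, a n = pq (Real.sqrt d) n)
    (ha'0 : a' 0 = 2 * a 0) (ha' : ∀ n, 1 ≤ n → a' n = a n)
    (u v : ℕ → ℤ) (hu0 : u 0 = a 0) (hv0 : v 0 = 1)
    (hu : ∀ n, u (n + 1) = a' n * v n - u n)
    (hv : ∀ n, v n * v (n + 1) = (d : ℤ) - (u (n + 1)) ^ 2)
    (P Q : ℕ → ℤ)
    (hP0 : P 0 = 0) (hP1 : P 1 = 1) (hQ0 : Q 0 = 1) (hQ1 : Q 1 = 0)
    (hP : ∀ n, P (n + 2) = a n * P (n + 1) + P n)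
    (hQ : ∀ n, Q (n + 2) = a n * Q (n + 1) + Q n)
    (T : ℕ)
    (hper : ∀ n, 1 ≤ n → pq (Real.sqrt d) (n + T) = pq (Real.sqrt d) n)
    (hTodd : Odd T) :
    ((∃ x y : ℕ, 0 < x ∧ 0 < y ∧ Nat.Coprime x y ∧
        (x : ℤ) ^ 2 - (d : ℤ) * (y : ℤ) ^ 2 = m) ↔
      (∃ j, 1 ≤ j ∧ j ≤ T ∧
        ((-1 : ℤ) ^ j * v j = m ∨ (-1 : ℤ) ^ j * v j = -m))) ∧
    ((∃ j, 1 ≤ j ∧ j ≤ T ∧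
        ((-1 : ℤ) ^ j * v j = m ∨ (-1 : ℤ) ^ j * v j = -m)) →
      ∀ x y : ℕ,
        (0 < x ∧ 0 < y ∧ Nat.Coprime x y ∧
          (x : ℤ) ^ 2 - (d : ℤ) * (y : ℤ) ^ 2 = m) ↔
        ((∃ N k : ℕ, 1 ≤ N ∧ N ≤ T ∧ (-1 : ℤ) ^ N * v N = m ∧
            (x : ℤ) = P (N + 2 * k * T + 1) ∧ (y : ℤ) = Q (N + 2 * k * T + 1)) ∨
         (∃ M k : ℕ, 1 ≤ M ∧ M ≤ T ∧ (-1 : ℤ) ^ M * v M = -m ∧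
            (x : ℤ) = P (M + (2 * k + 1) * T + 1) ∧
            (y : ℤ) = Q (M + (2 * k + 1) * T + 1)))) := by
  obtain rfl : a = pq √d := funext ha
  obtain rfl : P = cfNum (pq √d) := funext (eq_cfNum_of_recurrence _ hP0 hP1 hP)
  obtain rfl : Q = cfDen (pq √d) := funext (eq_cfDen_of_recurrence _ hQ0 hQ1 hQ)
  have hv_ne (n : ℕ) : v n ≠ 0 := left_ne_zero_of_mul (hv n ▸ natCast_sub_sq_ne_zero hd _)
  have hcq {n : ℕ} := cq_sqrt_eq hd ha'0 ha' hu0 hv0 hv_ne hu hv (n := n)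
  have hs (j : ℕ) (hj : 1 ≤ j) : (-1 : ℤ) ^ (j + T) * v (j + T) = -((-1) ^ j * v j) := by
    have hvT : v (j + T) = v j :=
      (irrational_sqrt_natCast_iff.2 hd).eq_of_intCast_add_div_eq (hv_ne _) (hv_ne _) (by
        rw [← hcq (by omega), ← hcq hj, cq_add_eq_of_pq_add_eq hper hj])
    rw [hvT, pow_add, hTodd.neg_one_pow]
    ring
  have hsol (x y : ℕ) : (0 < x ∧ 0 < y ∧ x.Coprime y ∧ (x : ℤ) ^ 2 - d * y ^ 2 = m) ↔
      ∃ j, 1 ≤ j ∧ (-1) ^ j * v j = m ∧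
        (x : ℤ) = cfNum (pq √d) (j + 1) ∧ (y : ℤ) = cfDen (pq √d) (j + 1) := by
    rw [coprime_sq_sub_mul_sq_eq_iff hd hm hmd]
    exact exists_congr fun j => and_congr_right fun hj => by
      rw [cfNum_sq_sub_mul_cfDen_sq hd (hv_ne j) (hcq hj)]
  have key (x y : ℕ) := (hsol x y).trans
    (exists_eq_and_iff_of_add_eq_neg (s := fun j => (-1) ^ j * v j) hTodd.pos hs m _)
  refine ⟨⟨fun ⟨x, y, hxy⟩ => ?_, fun ⟨j, hj1, _, hj⟩ => ?_⟩, fun _ => key⟩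
  · rcases (key x y).1 hxy with ⟨N, -, hN1, hNT, hN, -⟩ | ⟨M, -, hM1, hMT, hM, -⟩
    exacts [⟨N, hN1, hNT, Or.inl hN⟩, ⟨M, hM1, hMT, Or.inr hM⟩]
  · obtain ⟨i, hi1, hi⟩ : ∃ i, 1 ≤ i ∧ (-1) ^ i * v i = m :=
      hj.elim (fun h => ⟨j, hj1, h⟩) fun h => ⟨j + T, by omega, by rw [hs j hj1, h, neg_neg]⟩
    obtain ⟨x, hx⟩ := Int.eq_ofNat_of_zero_le (cfNum_succ_pos (pq_sqrt_pos hd) i).le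
    obtain ⟨y, hy⟩ := Int.eq_ofNat_of_zero_le
      (cfDen_pos (fun k => pq_sqrt_pos hd (k + 1)) (n := i + 1) (by omega)).le
    exact ⟨x, y, (hsol x y).2 ⟨i, hi1, hi, hx.symm, hy.symm⟩⟩

/-- Theorem 14, case `T` odd: description of the coprime positive
solutions of `x² - d·y² = m` (`|m| < √d`).  `P (n+2) = p_n`, `Q (n+2) = q_n`, so
`p_{j-1} = P (j+1)`. -/
theorem stmt13 (d : ℕ) (hd : ¬ IsSquare d)
    (m : ℤ) (hm : m ≠ 0) (hmd : |(m : ℝ)| < Real.sqrt d)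
    (a a' : ℕ → ℤ) (ha : ∀ n, a n = pq (Real.sqrt d) n)
    (ha'0 : a' 0 = 2 * a 0) (ha' : ∀ n, 1 ≤ n → a' n = a n)
    (u v : ℕ → ℤ) (hu0 : u 0 = a 0) (hv0 : v 0 = 1)
    (hupos : ∀ n, 0 < u n) (hvpos : ∀ n, 0 < v n)
    (hu : ∀ n, u (n + 1) = a' n * v n - u n)
    (hv : ∀ n, v n * v (n + 1) = (d : ℤ) - (u (n + 1)) ^ 2)
    (P Q : ℕ → ℤ)
    (hP0 : P 0 = 0) (hP1 : P 1 = 1) (hQ0 : Q 0 = 1) (hQ1 : Q 1 = 0)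
    (hP : ∀ n, P (n + 2) = a n * P (n + 1) + P n)
    (hQ : ∀ n, Q (n + 2) = a n * Q (n + 1) + Q n)
    (T : ℕ) (hT : 1 ≤ T)
    (hper : ∀ n, 1 ≤ n → pq (Real.sqrt d) (n + T) = pq (Real.sqrt d) n)
    (hmin : ∀ T', 1 ≤ T' →
      (∀ n, 1 ≤ n → pq (Real.sqrt d) (n + T') = pq (Real.sqrt d) n) → T ≤ T')
    (hTodd : Odd T) :
    ((∃ x y : ℕ, 0 < x ∧ 0 < y ∧ Nat.Coprime x y ∧
        (x : ℤ) ^ 2 - (d : ℤ) * (y : ℤ) ^ 2 = m) ↔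
      (∃ j, 1 ≤ j ∧ j ≤ T ∧
        ((-1 : ℤ) ^ j * v j = m ∨ (-1 : ℤ) ^ j * v j = -m))) ∧
    ((∃ j, 1 ≤ j ∧ j ≤ T ∧
        ((-1 : ℤ) ^ j * v j = m ∨ (-1 : ℤ) ^ j * v j = -m)) →
      ∀ x y : ℕ,
        (0 < x ∧ 0 < y ∧ Nat.Coprime x y ∧
          (x : ℤ) ^ 2 - (d : ℤ) * (y : ℤ) ^ 2 = m) ↔
        ((∃ N k : ℕ, 1 ≤ N ∧ N ≤ T ∧ (-1 : ℤ) ^ N * v N = m ∧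
            (x : ℤ) = P (N + 2 * k * T + 1) ∧ (y : ℤ) = Q (N + 2 * k * T + 1)) ∨
         (∃ M k : ℕ, 1 ≤ M ∧ M ≤ T ∧ (-1 : ℤ) ^ M * v M = -m ∧
            (x : ℤ) = P (M + (2 * k + 1) * T + 1) ∧
            (y : ℤ) = Q (M + (2 * k + 1) * T + 1)))) :=
  stmt13_general d hd m hm hmd a a' ha ha'0 ha' u v hu0 hv0 hu hv P Q hP0 hP1 hQ0 hQ1 hP hQ T hper
    hTodd
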